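/- arXiv:math/0510568 — 7 statements merged into one kernel-verified Lean document; each statement's English description precedes it below -/
import Mathlib

section
/- Let c be the unique real number c > 0 such that ∫₀^c (e^x − 1)/x dx = 1. Then 0.804 < c < 0.805. -/
open Real MeasureTheory intervalIntegral Finset

noncomputable def fInt : ℝ → ℝ := fun x => (Real.exp x - 1) / x

lemma fInt_nonneg {x : ℝ} (hx : 0 ≤ x) : 0 ≤ fInt x :=
  div_nonneg (by nlinarith [Real.add_one_le_exp x]) hx

lemma fInt_le_exp {x : ℝ} (hx : 0 ≤ x) : fInt x ≤ Real.exp x := by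
  rcases eq_or_lt_of_le hx with h | h
  · simp [fInt, ← h, Real.exp_pos 0 |>.le, (Real.exp_pos 0).le]
  · rw [fInt, div_le_iff₀ h]
    have h1 := Real.add_one_le_exp (-x)
    have h2 := Real.exp_pos x
    have h3 : Real.exp (-x) * Real.exp x = 1 := by
      rw [← Real.exp_add]; simp
    nlinarith

lemma fInt_integrable {b : ℝ} (hb : 0 ≤ b) : IntervalIntegrable fInt volume 0 b := by
  rw [intervalIntegrable_iff]
  apply Measure.integrableOn_of_bounded (M := Real.exp b)
  · rw [Set.uIoc_of_le hb]; exact ne_of_lt measure_Ioc_lt_top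
  · apply Measurable.aestronglyMeasurable
    exact (Real.measurable_exp.sub measurable_const).div measurable_id
  · filter_upwards [ae_restrict_mem measurableSet_uIoc] with x hx
    rw [Set.uIoc_of_le hb] at hx
    rw [Real.norm_eq_abs, abs_of_nonneg (fInt_nonneg hx.1.le)]
    exact (fInt_le_exp hx.1.le).trans (Real.exp_le_exp.2 hx.2)

lemma poly_le_fInt {x : ℝ} (hx : 0 < x) :
    1 + x/2 + x^2/6 + x^3/24 ≤ fInt x := by
  have h := Real.sum_le_exp_of_nonneg hx.le 5
  rw [show (5:ℕ) = 4+1 by rfl] at h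
  simp only [Finset.sum_range_succ, Finset.sum_range_zero, Nat.factorial] at h
  rw [fInt, le_div_iff₀ hx]
  push_cast at h
  nlinarith [h]

lemma fInt_le_poly {x : ℝ} (hx0 : 0 ≤ x) (hx1 : x ≤ 1) :
    fInt x ≤ 1 + x/2 + x^2/6 + x^3/24 + x^4/120 + 7*x^5/4320 := by
  rcases eq_or_lt_of_le hx0 with h | h
  · simp [fInt, ← h]
  · have hb := Real.exp_bound' hx0 hx1 (n := 6) (by norm_num)
    simp only [Finset.sum_range_succ, Finset.sum_range_zero, Nat.factorial] at hb
    rw [fInt, div_le_iff₀ h]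
    push_cast at hb
    nlinarith [hb, pow_pos h 6]

lemma poly_hasDeriv_lower (x : ℝ) :
    HasDerivAt (fun y : ℝ => y + y^2/4 + y^3/18 + y^4/96)
      (1 + x/2 + x^2/6 + x^3/24) x := by
  have h := ((hasDerivAt_id x).add (((hasDerivAt_pow 2 x).div_const 4).add
    (((hasDerivAt_pow 3 x).div_const 18).add ((hasDerivAt_pow 4 x).div_const 96))))
  convert h using 1
  · rfl
  · rfl
  · ext y; simp only [Pi.add_apply, id_eq]; ring
  · push_cast; ring

lemma poly_hasDeriv_upper (x : ℝ) :
    HasDerivAt (fun y : ℝ => y + y^2/4 + y^3/18 + y^4/96 + y^5/600 + 7*y^6/25920)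
      (1 + x/2 + x^2/6 + x^3/24 + x^4/120 + 7*x^5/4320) x := by
  have h := ((hasDerivAt_id x).add (((hasDerivAt_pow 2 x).div_const 4).add
    (((hasDerivAt_pow 3 x).div_const 18).add (((hasDerivAt_pow 4 x).div_const 96).add
    (((hasDerivAt_pow 5 x).div_const 600).add
      (((hasDerivAt_pow 6 x).const_mul 7).div_const 25920))))))
  convert h using 1
  · rfl
  · rfl
  · ext y; simp only [Pi.add_apply, id_eq]; ring
  · push_cast; ring

lemma lower_poly_integrable (a b : ℝ) :
    IntervalIntegrable (fun x : ℝ => 1 + x/2 + x^2/6 + x^3/24) volume a b :=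
  (Continuous.intervalIntegrable (by continuity)) a b

lemma upper_poly_integrable (a b : ℝ) :
    IntervalIntegrable (fun x : ℝ => 1 + x/2 + x^2/6 + x^3/24 + x^4/120 + 7*x^5/4320) volume a b :=
  (Continuous.intervalIntegrable (by continuity)) a b

lemma lower_bound {t : ℝ} (ht : 0 ≤ t) :
    t + t^2/4 + t^3/18 + t^4/96 ≤ ∫ x in (0:ℝ)..t, fInt x := by
  have hpoly : (∫ x in (0:ℝ)..t, (1 + x/2 + x^2/6 + x^3/24))
      = t + t^2/4 + t^3/18 + t^4/96 := by
    rw [intervalIntegral.integral_eq_sub_of_hasDerivAt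
      (fun x _ => poly_hasDeriv_lower x) (lower_poly_integrable 0 t)]
    norm_num
  rw [← hpoly]
  apply intervalIntegral.integral_mono_ae_restrict ht (lower_poly_integrable 0 t)
    (fInt_integrable ht)
  rw [Filter.EventuallyLE, ae_restrict_iff' measurableSet_Icc]
  have h0 : ∀ᵐ (x : ℝ), x ≠ 0 := by
    rw [ae_iff]; simp
  filter_upwards [h0] with x hx0 hx
  exact poly_le_fInt (lt_of_le_of_ne hx.1 (Ne.symm hx0))

lemma upper_bound {t : ℝ} (ht : 0 ≤ t) (ht1 : t ≤ 1) :
    (∫ x in (0:ℝ)..t, fInt x) ≤ t + t^2/4 + t^3/18 + t^4/96 + t^5/600 + 7*t^6/25920 := by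
  have hpoly : (∫ x in (0:ℝ)..t, (1 + x/2 + x^2/6 + x^3/24 + x^4/120 + 7*x^5/4320))
      = t + t^2/4 + t^3/18 + t^4/96 + t^5/600 + 7*t^6/25920 := by
    rw [intervalIntegral.integral_eq_sub_of_hasDerivAt
      (fun x _ => poly_hasDeriv_upper x) (upper_poly_integrable 0 t)]
    norm_num
  rw [← hpoly]
  exact intervalIntegral.integral_mono_on ht (fInt_integrable ht) (upper_poly_integrable 0 t)
    (fun x hx => fInt_le_poly hx.1 (hx.2.trans ht1))

/-- Let `c` be the unique real number `c > 0` such that `∫₀^c (e^x − 1)/x dx = 1`.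
Then `0.804 < c < 0.805`. -/
theorem stmt_1 (c : ℝ) (hc : 0 < c)
    (hceq : (∫ x in (0:ℝ)..c, (Real.exp x - 1) / x) = 1) :
    0.804 < c ∧ c < 0.805 := by
  have hceq' : (∫ x in (0:ℝ)..c, fInt x) = 1 := hceq
  constructor
  · by_contra h
    push_neg at h
    have hsplit : (∫ x in (0:ℝ)..c, fInt x) + (∫ x in c..(0.804:ℝ), fInt x)
        = ∫ x in (0:ℝ)..(0.804:ℝ), fInt x := by
      apply intervalIntegral.integral_add_adjacent_intervals
      · exact fInt_integrable hc.le
      · apply (fInt_integrable (b := 0.804) (by norm_num)).mono_set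
        rw [Set.uIcc_of_le h, Set.uIcc_of_le (by norm_num : (0:ℝ) ≤ 0.804)]
        exact Set.Icc_subset_Icc hc.le le_rfl
    have hnn : 0 ≤ ∫ x in c..(0.804:ℝ), fInt x :=
      intervalIntegral.integral_nonneg h (fun x hx => fInt_nonneg (hc.le.trans hx.1))
    have hub := upper_bound (t := 0.804) (by norm_num) (by norm_num)
    rw [hceq'] at hsplit
    norm_num at hub
    linarith
  · by_contra h
    push_neg at h
    have hsplit : (∫ x in (0:ℝ)..(0.805:ℝ), fInt x) + (∫ x in (0.805:ℝ)..c, fInt x)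
        = ∫ x in (0:ℝ)..c, fInt x := by
      apply intervalIntegral.integral_add_adjacent_intervals
      · exact fInt_integrable (by norm_num)
      · apply (fInt_integrable hc.le).mono_set
        rw [Set.uIcc_of_le h, Set.uIcc_of_le hc.le]
        exact Set.Icc_subset_Icc (by norm_num) le_rfl
    have hnn : 0 ≤ ∫ x in (0.805:ℝ)..c, fInt x :=
      intervalIntegral.integral_nonneg h (fun x hx => fInt_nonneg ((by norm_num : (0:ℝ) ≤ 0.805).trans hx.1))
    have hlb := lower_bound (t := 0.805) (by norm_num)
    rw [hceq'] at hsplit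
    norm_num at hlb
    linarith
end

section
/- Let d_k (k ≥ 1) denote the decision numbers. Then the sequence (d_k) is strictly increasing, and d_k → 1 as k → ∞. -/
private lemma F_anti (k : ℕ) (hk : 1 ≤ k) {a b : ℝ} (ha : 0 < a) (hab : a < b) :
    ∑ j ∈ Finset.Icc 1 k, ((b ^ j)⁻¹ - 1) / (j : ℝ) <
    ∑ j ∈ Finset.Icc 1 k, ((a ^ j)⁻¹ - 1) / (j : ℝ) := by
  apply Finset.sum_lt_sum_of_nonempty
  · exact Finset.nonempty_Icc.mpr hk
  · intro j hj
    have hj1 : 1 ≤ j := (Finset.mem_Icc.mp hj).1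
    have hjpos : (0:ℝ) < j := by exact_mod_cast hj1
    have hpow : a ^ j < b ^ j := by
      apply pow_lt_pow_left₀ hab ha.le
      omega
    have hapow : (0:ℝ) < a ^ j := pow_pos ha j
    have : (b ^ j)⁻¹ < (a ^ j)⁻¹ := by
      exact inv_strictAnti₀ hapow hpow
    apply div_lt_div_of_pos_right (by linarith) hjpos

private lemma F_lb (k : ℕ) {x : ℝ} (hx0 : 0 < x) (hx1 : x ≤ 1) :
    (x⁻¹ - 1) * ∑ j ∈ Finset.Icc 1 k, (1 : ℝ) / j ≤
    ∑ j ∈ Finset.Icc 1 k, ((x ^ j)⁻¹ - 1) / (j : ℝ) := by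
  rw [Finset.mul_sum]
  apply Finset.sum_le_sum
  intro j hj
  have hj1 : 1 ≤ j := (Finset.mem_Icc.mp hj).1
  have hjpos : (0:ℝ) < j := by exact_mod_cast hj1
  have hpow : x ^ j ≤ x := by
    calc x ^ j ≤ x ^ 1 := pow_le_pow_of_le_one hx0.le hx1 hj1
    _ = x := pow_one x
  have hxpow : (0:ℝ) < x ^ j := pow_pos hx0 j
  have hinv : x⁻¹ ≤ (x ^ j)⁻¹ := by
    exact inv_anti₀ hxpow hpow
  rw [mul_one_div]
  apply div_le_div_of_nonneg_right (by linarith) hjpos.le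

/-- The decision numbers `d_k` (the unique `d ∈ (0,1)` with
`∑_{j=1}^k (d^{-j} − 1)/j = 1`) form a strictly increasing sequence with `d_k → 1`. -/
theorem stmt_3 (d : ℕ → ℝ)
    (hd : ∀ k : ℕ, 1 ≤ k → d k ∈ Set.Ioo (0:ℝ) 1 ∧
      ∑ j ∈ Finset.Icc 1 k, (((d k) ^ j)⁻¹ - 1) / (j : ℝ) = 1) :
    (∀ k : ℕ, 1 ≤ k → d k < d (k + 1)) ∧
    Filter.Tendsto d Filter.atTop (nhds 1) := by
  constructor
  · intro k hk
    obtain ⟨⟨hk0, hk1⟩, hks⟩ := hd k hk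
    obtain ⟨⟨hk0', hk1'⟩, hks'⟩ := hd (k+1) (by omega)
    by_contra h
    push_neg at h   -- d (k+1) ≤ d k
    -- F_{k+1}(d_k) > F_k(d_k) = 1 = F_{k+1}(d_{k+1}) ≥ F_{k+1}(d_k) if d_{k+1} < d_k
    have hsum : ∑ j ∈ Finset.Icc 1 (k+1), (((d k) ^ j)⁻¹ - 1) / (j : ℝ)
        = (∑ j ∈ Finset.Icc 1 k, (((d k) ^ j)⁻¹ - 1) / (j : ℝ))
          + (((d k) ^ (k+1))⁻¹ - 1) / ((k+1 : ℕ) : ℝ) := by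
      rw [← Finset.sum_Icc_succ_top (by omega : 1 ≤ k + 1)]
    have hextra : 0 < (((d k) ^ (k+1))⁻¹ - 1) / ((k+1 : ℕ) : ℝ) := by
      apply div_pos _ (by positivity)
      have hp : (d k) ^ (k+1) < 1 := pow_lt_one₀ hk0.le hk1 (by omega)
      have hp0 : (0:ℝ) < (d k) ^ (k+1) := pow_pos hk0 _
      have : 1 < ((d k) ^ (k+1))⁻¹ := (one_lt_inv₀ hp0).mpr hp
      linarith
    have h1 : 1 < ∑ j ∈ Finset.Icc 1 (k+1), (((d k) ^ j)⁻¹ - 1) / (j : ℝ) := by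
      rw [hsum, hks]; linarith
    rcases eq_or_lt_of_le h with heq | hlt
    · rw [heq] at hks'; linarith
    · have := F_anti (k+1) (by omega) hk0' hlt
      rw [hks'] at this
      linarith
  · rw [Metric.tendsto_atTop]
    intro ε hε
    rcases le_or_gt (1:ℝ) ε with hε1 | hε1
    · refine ⟨1, fun n hn => ?_⟩
      obtain ⟨⟨h0, h1⟩, _⟩ := hd n hn
      rw [Real.dist_eq, abs_sub_lt_iff]
      constructor <;> linarith
    · set x : ℝ := 1 - ε with hxdef
      have hx0 : 0 < x := by simp [hxdef]; linarith
      have hx1 : x < 1 := by simp [hxdef]; linarith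
      have hc : 0 < x⁻¹ - 1 := by
        have : 1 < x⁻¹ := (one_lt_inv₀ hx0).mpr hx1
        linarith
      -- harmonic sums tend to infinity
      have hharm : Filter.Tendsto (fun k : ℕ => ∑ j ∈ Finset.Icc 1 k, (1:ℝ)/j)
          Filter.atTop Filter.atTop := by
        have h := Real.tendsto_sum_range_one_div_nat_succ_atTop
        have heq : ∀ k : ℕ, ∑ j ∈ Finset.Icc 1 k, (1:ℝ)/j
            = ∑ i ∈ Finset.range k, (1:ℝ)/(i+1) := by
          intro k
          rw [← Finset.Ico_add_one_right_eq_Icc, Finset.sum_Ico_eq_sum_range]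
          simp [add_comm]
        simpa only [heq] using h
      have := hharm.eventually_ge_atTop ((x⁻¹ - 1)⁻¹ + 1)
      rw [Filter.eventually_atTop] at this
      obtain ⟨N, hN⟩ := this
      refine ⟨max N 1, fun n hn => ?_⟩
      obtain ⟨⟨h0, h1⟩, hsum⟩ := hd n (le_trans (le_max_right N 1) hn)
      have hH := hN n (le_trans (le_max_left N 1) hn)
      have hFx : 1 < ∑ j ∈ Finset.Icc 1 n, ((x ^ j)⁻¹ - 1) / (j : ℝ) := by
        have hlb := F_lb n hx0 hx1.le
        have : 1 < (x⁻¹ - 1) * ∑ j ∈ Finset.Icc 1 n, (1:ℝ)/j := by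
          have h2 : (x⁻¹ - 1) * ((x⁻¹ - 1)⁻¹ + 1) ≤ (x⁻¹ - 1) * ∑ j ∈ Finset.Icc 1 n, (1:ℝ)/j :=
            mul_le_mul_of_nonneg_left hH hc.le
          have h3 : (x⁻¹ - 1) * ((x⁻¹ - 1)⁻¹ + 1) = 1 + (x⁻¹ - 1) := by
            rw [mul_add, mul_inv_cancel₀ hc.ne', mul_one]
          nlinarith
        linarith
      -- so d n > x, since F n is strictly decreasing
      have hdx : x < d n := by
        by_contra hle
        push_neg at hle
        rcases eq_or_lt_of_le hle with heq | hlt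
        · rw [heq] at hsum; linarith
        · have := F_anti n (le_trans (le_max_right N 1) hn) h0 hlt
          rw [hsum] at this
          linarith
      rw [Real.dist_eq, abs_sub_lt_iff]
      constructor <;> [linarith; skip]
      simp only [hxdef] at hdx
      linarith
end

section
/- Let d_k (k ≥ 1) denote the decision numbers and let c be the unique positive real number with ∫₀^c (e^x − 1)/x dx = 1. Then for every integer k ≥ 1, one has k·log(1/d_k) < c ≤ (k+1)·log(1/d_k). -/
open Real MeasureTheory Set

noncomputable def φ : ℝ → ℝ := fun x => (Real.exp x - 1) / x

lemma φ_def (x : ℝ) : φ x = (Real.exp x - 1) / x := rfl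

lemma φ_zero : φ 0 = 0 := by simp [φ]

lemma φ_nonneg {x : ℝ} (hx : 0 ≤ x) : 0 ≤ φ x := by
  have := Real.add_one_le_exp x
  exact div_nonneg (by linarith) hx

lemma φ_strictMono {x y : ℝ} (hx : 0 < x) (hxy : x < y) : φ x < φ y := by
  have h := strictConvexOn_exp.secant_strict_mono (a := 0) (x := x) (y := y)
    (Set.mem_univ _) (Set.mem_univ _) (Set.mem_univ _)
    (ne_of_gt hx) (ne_of_gt (hx.trans hxy)) hxy
  simpa [φ, Real.exp_zero] using h

lemma φ_monoOn : MonotoneOn φ (Set.Ici (0:ℝ)) := by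
  intro x hx y hy hxy
  rcases eq_or_lt_of_le hxy with rfl | hlt
  · exact le_refl _
  rcases eq_or_lt_of_le (Set.mem_Ici.mp hx) with rfl | hx'
  · rw [φ_zero]; exact φ_nonneg hlt.le
  · exact (φ_strictMono hx' hlt).le

lemma φ_integrable {a b : ℝ} (ha : 0 ≤ a) (hb : 0 ≤ b) :
    IntervalIntegrable φ volume a b := by
  apply MonotoneOn.intervalIntegrable
  apply φ_monoOn.mono
  intro x hx
  exact le_trans (le_min ha hb) hx.1

lemma φ_int_le {a b : ℝ} (ha : 0 ≤ a) (hab : a ≤ b) :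
    (∫ x in a..b, φ x) ≤ (b - a) * φ b := by
  have h := intervalIntegral.integral_mono_on (f := φ) (g := fun _ => φ b) hab
    (φ_integrable ha (ha.trans hab)) intervalIntegrable_const
    (fun x hx => φ_monoOn (Set.mem_Ici.mpr (ha.trans hx.1))
      (Set.mem_Ici.mpr (ha.trans hab)) hx.2)
  simpa [smul_eq_mul] using h

lemma φ_le_int {a b : ℝ} (ha : 0 ≤ a) (hab : a ≤ b) :
    (b - a) * φ a ≤ ∫ x in a..b, φ x := by
  have h := intervalIntegral.integral_mono_on (f := fun _ => φ a) (g := φ) hab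
    intervalIntegrable_const (φ_integrable ha (ha.trans hab))
    (fun x hx => φ_monoOn (Set.mem_Ici.mpr ha)
      (Set.mem_Ici.mpr (ha.trans hx.1)) hx.1)
  simpa [smul_eq_mul] using h

lemma φ_int_lt {b : ℝ} (hb : 0 < b) : (∫ x in (0:ℝ)..b, φ x) < b * φ b := by
  have h1 : (∫ x in (0:ℝ)..b, φ x)
      = (∫ x in (0:ℝ)..(b/2), φ x) + ∫ x in (b/2)..b, φ x :=
    (intervalIntegral.integral_add_adjacent_intervals
      (φ_integrable le_rfl (by linarith)) (φ_integrable (by linarith) hb.le)).symm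
  have h2 := φ_int_le (a := 0) (b := b/2) le_rfl (by linarith)
  have h3 := φ_int_le (a := b/2) (b := b) (by linarith) (by linarith)
  have h4 : φ (b/2) < φ b := φ_strictMono (by linarith) (by linarith)
  nlinarith [h1, h2, h3, h4]

/-- With `d_k` the decision numbers and `c` the unique positive root of
`∫₀^c (e^x − 1)/x dx = 1`, for every `k ≥ 1`:
`k·log(1/d_k) < c ≤ (k+1)·log(1/d_k)`. -/
theorem stmt_5 (d : ℕ → ℝ)
    (hd : ∀ k : ℕ, 1 ≤ k → d k ∈ Set.Ioo (0:ℝ) 1 ∧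
      ∑ j ∈ Finset.Icc 1 k, (((d k) ^ j)⁻¹ - 1) / (j : ℝ) = 1)
    (c : ℝ) (hc : 0 < c)
    (hceq : (∫ x in (0:ℝ)..c, (Real.exp x - 1) / x) = 1) :
    ∀ k : ℕ, 1 ≤ k →
      (k : ℝ) * Real.log (1 / d k) < c ∧ c ≤ ((k : ℝ) + 1) * Real.log (1 / d k) := by
  intro k hk
  obtain ⟨⟨hd0, hd1⟩, hsum⟩ := hd k hk
  set t := Real.log (1 / d k) with ht_def
  have ht : 0 < t := Real.log_pos (by rw [lt_div_iff₀ hd0]; linarith)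
  have hφc : (∫ x in (0:ℝ)..c, φ x) = 1 := by
    rw [← hceq]; simp only [φ_def]
  have hexp : ∀ j : ℕ, Real.exp ((j:ℝ) * t) = ((d k) ^ j)⁻¹ := by
    intro j
    rw [Real.exp_nat_mul, ht_def, Real.exp_log (by positivity), one_div, inv_pow]
  have hterm : ∀ i : ℕ, t * φ (((i:ℝ)+1) * t) =
      (Real.exp (((i:ℝ)+1) * t) - 1) / ((i:ℝ)+1) := by
    intro i
    have hi : (0:ℝ) < (i:ℝ) + 1 := by positivity
    rw [φ_def]
    field_simp
  have hsum' : ∑ i ∈ Finset.range k, t * φ (((i:ℝ)+1) * t) = 1 := by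
    calc ∑ i ∈ Finset.range k, t * φ (((i:ℝ)+1) * t)
        = ∑ j ∈ Finset.Icc 1 k, (((d k) ^ j)⁻¹ - 1) / (j : ℝ) := by
          rw [← Finset.Ico_add_one_right_eq_Icc, Finset.sum_Ico_eq_sum_range]
          apply Finset.sum_congr (by norm_num)
          intro i _
          rw [hterm i, ← hexp (1+i)]
          push_cast
          ring_nf
      _ = 1 := hsum
  have hsplit : ∀ n : ℕ, (∫ x in (0:ℝ)..((n:ℝ)*t), φ x)
      = ∑ i ∈ Finset.range n, ∫ x in ((i:ℝ)*t)..(((i:ℝ)+1)*t), φ x := by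
    intro n
    have h := intervalIntegral.sum_integral_adjacent_intervals
      (a := fun i : ℕ => (i:ℝ) * t) (μ := volume) (f := φ) (n := n)
      (fun i _ => φ_integrable (by positivity) (by positivity))
    simp only [Nat.cast_zero, zero_mul, Nat.cast_add, Nat.cast_one] at h
    rw [← h]
  -- upper bound : ∫_0^{kt} φ < 1
  have hub : (∫ x in (0:ℝ)..((k:ℝ)*t), φ x) < 1 := by
    have key : ∑ i ∈ Finset.range k, (∫ x in ((i:ℝ)*t)..(((i:ℝ)+1)*t), φ x)
        < ∑ i ∈ Finset.range k, t * φ (((i:ℝ)+1) * t) := by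
      apply Finset.sum_lt_sum
      · intro i _
        have h := φ_int_le (a := (i:ℝ)*t) (b := ((i:ℝ)+1)*t) (by positivity) (by nlinarith)
        calc (∫ x in ((i:ℝ)*t)..(((i:ℝ)+1)*t), φ x)
            ≤ (((i:ℝ)+1)*t - (i:ℝ)*t) * φ (((i:ℝ)+1)*t) := h
          _ = t * φ (((i:ℝ)+1)*t) := by ring
      · refine ⟨0, Finset.mem_range.mpr (by omega), ?_⟩
        have h := φ_int_lt ht
        simpa using h
    rw [hsplit k]
    linarith [hsum', key]
  -- k t < c
  have hkc : (k:ℝ) * t < c := by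
    by_contra h
    push_neg at h
    have hadd : (∫ x in (0:ℝ)..((k:ℝ)*t), φ x)
        = (∫ x in (0:ℝ)..c, φ x) + ∫ x in c..((k:ℝ)*t), φ x :=
      (intervalIntegral.integral_add_adjacent_intervals
        (φ_integrable le_rfl hc.le) (φ_integrable hc.le (by positivity))).symm
    have hnn : 0 ≤ ∫ x in c..((k:ℝ)*t), φ x :=
      intervalIntegral.integral_nonneg h (fun x hx => φ_nonneg (hc.le.trans hx.1))
    linarith
  -- lower bound : 1 ≤ ∫_0^{(k+1)t} φ
  have hlb : 1 ≤ ∫ x in (0:ℝ)..(((k:ℝ)+1)*t), φ x := by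
    have hcast : ((k:ℝ)+1) = ((k+1 : ℕ) : ℝ) := by push_cast; ring
    rw [hcast, hsplit (k+1)]
    calc (1:ℝ) = ∑ i ∈ Finset.range k, t * φ (((i:ℝ)+1) * t) := hsum'.symm
      _ = ∑ i ∈ Finset.range (k+1), t * φ ((i:ℝ) * t) := by
          rw [Finset.sum_range_succ']
          simp only [φ_zero, mul_zero, Nat.cast_zero, zero_mul, add_zero]
          apply Finset.sum_congr rfl
          intro i _
          push_cast
          ring_nf
      _ ≤ ∑ i ∈ Finset.range (k+1), ∫ x in ((i:ℝ)*t)..(((i:ℝ)+1)*t), φ x := by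
          apply Finset.sum_le_sum
          intro i _
          have h := φ_le_int (a := (i:ℝ)*t) (b := ((i:ℝ)+1)*t) (by positivity) (by nlinarith)
          calc t * φ ((i:ℝ)*t) = (((i:ℝ)+1)*t - (i:ℝ)*t) * φ ((i:ℝ)*t) := by ring
            _ ≤ _ := h
  -- c ≤ (k+1) t
  have hck : c ≤ ((k:ℝ)+1) * t := by
    by_contra h
    push_neg at h
    have hadd : (∫ x in (0:ℝ)..c, φ x)
        = (∫ x in (0:ℝ)..(((k:ℝ)+1)*t), φ x) + ∫ x in (((k:ℝ)+1)*t)..c, φ x :=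
      (intervalIntegral.integral_add_adjacent_intervals
        (φ_integrable le_rfl (by positivity)) (φ_integrable (by positivity) hc.le)).symm
    have hpos : 0 < ∫ x in (((k:ℝ)+1)*t)..c, φ x := by
      apply intervalIntegral.intervalIntegral_pos_of_pos_on (φ_integrable (by positivity) hc.le) _ h
      intro x hx
      have hx0 : 0 < x := lt_trans (by positivity) hx.1
      have := Real.add_one_lt_exp (ne_of_gt hx0)
      exact div_pos (by linarith) hx0
    linarith
  exact ⟨hkc, hck⟩
end

section
/- Let d_k (k ≥ 1) denote the decision numbers and let c be the unique positive real number with ∫₀^c (e^x − 1)/x dx = 1. Then for every integer k ≥ 1, one has 1 − e^{−c/(k+1)} ≤ 1 − d_k < c/k. -/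
open MeasureTheory intervalIntegral

/-- Continuous extension of `(e^x - 1)/x`. -/
noncomputable def hfun (x : ℝ) : ℝ := if x = 0 then 1 else (Real.exp x - 1) / x

lemma hfun_cont : Continuous hfun := by
  rw [continuous_iff_continuousAt]
  intro x
  rcases eq_or_ne x 0 with rfl | hx
  · have hs : Filter.Tendsto (slope Real.exp 0) (nhdsWithin 0 {(0:ℝ)}ᶜ) (nhds 1) := by
      have := hasDerivAt_iff_tendsto_slope.mp (Real.hasDerivAt_exp 0)
      simpa using this
    have h1 : Filter.Tendsto hfun (nhdsWithin 0 {(0:ℝ)}ᶜ) (nhds 1) := by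
      refine hs.congr' ?_
      filter_upwards [self_mem_nhdsWithin] with y hy
      simp only [Set.mem_compl_iff, Set.mem_singleton_iff] at hy
      simp [hfun, slope, hy, Real.exp_zero, div_eq_inv_mul]
    have h2 : Filter.Tendsto hfun (pure (0:ℝ)) (nhds 1) := by
      have : hfun 0 = 1 := by simp [hfun]
      simpa [this] using (tendsto_pure_nhds hfun 0)
    have := h1.sup h2
    rw [nhdsNE_sup_pure] at this
    have h0 : hfun 0 = 1 := by simp [hfun]
    simpa [ContinuousAt, h0] using this
  · have : ContinuousAt (fun y => (Real.exp y - 1) / y) x := by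
      exact ((Real.continuous_exp.sub continuous_const).continuousAt).div
        continuousAt_id hx
    refine this.congr ?_
    filter_upwards [isOpen_ne.mem_nhds hx] with y hy
    simp [hfun, hy]

lemma hfun_int (a b : ℝ) : IntervalIntegrable hfun volume a b :=
  hfun_cont.intervalIntegrable a b

lemma hfun_mono : MonotoneOn hfun (Set.Ici 0) := by
  intro a ha b hb hab
  simp only [Set.mem_Ici] at ha hb
  rcases eq_or_lt_of_le ha with rfl | ha'
  · rcases eq_or_lt_of_le hb with rfl | hb'
    · exact le_rfl
    · have h1 : (1:ℝ) ≤ (Real.exp b - 1) / b := by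
        rw [le_div_iff₀ hb']
        have := Real.add_one_le_exp b
        linarith
      simp only [hfun, if_pos rfl, if_neg hb'.ne']
      exact h1
  · have hb' : 0 < b := lt_of_lt_of_le ha' hab
    have h1 := ConvexOn.secant_mono convexOn_exp (a := (0:ℝ)) (x := a) (y := b)
      (Set.mem_univ _) (Set.mem_univ _) (Set.mem_univ _) ha'.ne' hb'.ne' hab
    simp only [Real.exp_zero, sub_zero] at h1
    simp only [hfun, if_neg ha'.ne', if_neg hb'.ne']
    exact h1

lemma hfun_one_le {x : ℝ} (hx : 0 ≤ x) : 1 ≤ hfun x := by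
  have h0 : hfun 0 = 1 := by simp [hfun]
  calc (1:ℝ) = hfun 0 := h0.symm
    _ ≤ hfun x := hfun_mono (Set.self_mem_Ici) hx hx

lemma integral_hfun_eq (a b : ℝ) :
    (∫ x in a..b, (Real.exp x - 1) / x) = ∫ x in a..b, hfun x := by
  apply intervalIntegral.integral_congr_ae
  have h0 : ∀ᵐ x : ℝ, x ≠ 0 := by
    refine (MeasureTheory.ae_iff).mpr ?_
    simpa using (measure_singleton (0:ℝ))
  filter_upwards [h0] with x hx _
  simp [hfun, hx]

lemma step_bounds {a b : ℝ} (ha : 0 ≤ a) (hab : a ≤ b) :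
    (b - a) * hfun a ≤ (∫ x in a..b, hfun x) ∧
    (∫ x in a..b, hfun x) ≤ (b - a) * hfun b := by
  constructor
  · calc (b - a) * hfun a = ∫ _ in a..b, hfun a := by
          rw [intervalIntegral.integral_const, smul_eq_mul]
      _ ≤ ∫ x in a..b, hfun x := by
          apply intervalIntegral.integral_mono_on hab
            (intervalIntegrable_const) (hfun_int a b)
          intro x hx
          exact hfun_mono ha (le_trans ha hx.1) hx.1
  · calc (∫ x in a..b, hfun x) ≤ ∫ _ in a..b, hfun b := by
          apply intervalIntegral.integral_mono_on hab
            (hfun_int a b) (intervalIntegrable_const)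
          intro x hx
          exact hfun_mono (le_trans ha hx.1) (le_trans ha hab) hx.2
      _ = (b - a) * hfun b := by
          rw [intervalIntegral.integral_const, smul_eq_mul]

lemma sum_bounds (t : ℝ) (ht : 0 < t) (k : ℕ) :
    (∫ x in (0:ℝ)..((k:ℝ)*t), hfun x) ≤ ∑ j ∈ Finset.Icc 1 k, t * hfun ((j:ℝ)*t) ∧
    ∑ j ∈ Finset.Icc 1 k, t * hfun ((j:ℝ)*t) ≤ ∫ x in t..(((k:ℝ)+1)*t), hfun x := by
  induction k with
  | zero => simp
  | succ n ih =>
    have hn0 : (0:ℝ) ≤ (n:ℝ) * t := by positivity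
    have hstep : ((n:ℝ)*t) ≤ ((n:ℝ)+1)*t := by nlinarith
    have hstep2 : (((n:ℝ)+1)*t) ≤ ((n:ℝ)+2)*t := by nlinarith
    have hn1 : (0:ℝ) ≤ ((n:ℝ)+1) * t := le_trans hn0 hstep
    have hsum : ∑ j ∈ Finset.Icc 1 (n+1), t * hfun ((j:ℝ)*t)
        = (∑ j ∈ Finset.Icc 1 n, t * hfun ((j:ℝ)*t)) + t * hfun (((n:ℝ)+1)*t) := by
      rw [Finset.sum_Icc_succ_top (by omega) (fun j => t * hfun ((j:ℝ)*t)),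
        Nat.cast_add, Nat.cast_one]
    constructor
    · have hsplit : (∫ x in (0:ℝ)..((n:ℝ)*t), hfun x)
          + (∫ x in ((n:ℝ)*t)..(((n:ℝ)+1)*t), hfun x)
          = ∫ x in (0:ℝ)..(((n:ℝ)+1)*t), hfun x :=
        intervalIntegral.integral_add_adjacent_intervals (hfun_int _ _) (hfun_int _ _)
      have h2 : (∫ x in ((n:ℝ)*t)..(((n:ℝ)+1)*t), hfun x) ≤ t * hfun (((n:ℝ)+1)*t) := by
        have := (step_bounds hn0 hstep).2
        have heq : ((n:ℝ)+1)*t - (n:ℝ)*t = t := by ring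
        rwa [heq] at this
      have : ((n:ℝ)+1)*t = ((n+1:ℕ):ℝ)*t := by push_cast; ring
      rw [hsum, ← this, ← hsplit]
      linarith [ih.1]
    · have hsplit : (∫ x in t..(((n:ℝ)+1)*t), hfun x)
          + (∫ x in (((n:ℝ)+1)*t)..(((n:ℝ)+2)*t), hfun x)
          = ∫ x in t..(((n:ℝ)+2)*t), hfun x :=
        intervalIntegral.integral_add_adjacent_intervals (hfun_int _ _) (hfun_int _ _)
      have h2 : t * hfun (((n:ℝ)+1)*t) ≤ ∫ x in (((n:ℝ)+1)*t)..(((n:ℝ)+2)*t), hfun x := by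
        have := (step_bounds hn1 hstep2).1
        have heq : ((n:ℝ)+2)*t - ((n:ℝ)+1)*t = t := by ring
        rwa [heq] at this
      have hcast : (((n+1:ℕ):ℝ)+1)*t = ((n:ℝ)+2)*t := by push_cast; ring
      rw [hsum, hcast, ← hsplit]
      linarith [ih.2]

/-- With `d_k` the decision numbers and `c` the unique positive root of
`∫₀^c (e^x − 1)/x dx = 1`, for every `k ≥ 1`:
`1 − e^{−c/(k+1)} ≤ 1 − d_k < c/k`. -/
theorem stmt_6 (d : ℕ → ℝ)
    (hd : ∀ k : ℕ, 1 ≤ k → d k ∈ Set.Ioo (0:ℝ) 1 ∧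
      ∑ j ∈ Finset.Icc 1 k, (((d k) ^ j)⁻¹ - 1) / (j : ℝ) = 1)
    (c : ℝ) (hc : 0 < c)
    (hceq : (∫ x in (0:ℝ)..c, (Real.exp x - 1) / x) = 1) :
    ∀ k : ℕ, 1 ≤ k →
      1 - Real.exp (-c / ((k : ℝ) + 1)) ≤ 1 - d k ∧ 1 - d k < c / (k : ℝ) := by
  intro k hk
  obtain ⟨⟨hd0, hd1⟩, hsum⟩ := hd k hk
  set t : ℝ := -Real.log (d k) with htdef
  have ht : 0 < t := by
    have := Real.log_neg hd0 hd1
    simpa [htdef] using this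
  have hdk : d k = Real.exp (-t) := by
    simp [htdef, Real.exp_log hd0]
  -- rewrite sum
  have hterm : ∀ j ∈ Finset.Icc 1 k, (((d k) ^ j)⁻¹ - 1) / (j : ℝ) = t * hfun ((j:ℝ)*t) := by
    intro j hj
    have hj1 : 1 ≤ j := (Finset.mem_Icc.mp hj).1
    have hjpos : (0:ℝ) < (j:ℝ) := by exact_mod_cast hj1
    have hjt : (0:ℝ) < (j:ℝ)*t := by positivity
    have hpow : ((d k) ^ j)⁻¹ = Real.exp ((j:ℝ)*t) := by
      rw [hdk, ← Real.exp_nat_mul, ← Real.exp_neg]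
      ring_nf
    rw [hpow]
    have : hfun ((j:ℝ)*t) = (Real.exp ((j:ℝ)*t) - 1) / ((j:ℝ)*t) := by
      simp [hfun, hjt.ne']
    rw [this]
    field_simp
  rw [Finset.sum_congr rfl hterm] at hsum
  have hck : (∫ x in (0:ℝ)..c, hfun x) = 1 := by
    rw [← integral_hfun_eq]; exact hceq
  obtain ⟨hlow, hhigh⟩ := sum_bounds t ht k
  -- k*t ≤ c
  have hkt : (k:ℝ) * t ≤ c := by
    by_contra hcon
    push_neg at hcon
    have hsplit : (∫ x in (0:ℝ)..c, hfun x) + (∫ x in c..((k:ℝ)*t), hfun x)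
        = ∫ x in (0:ℝ)..((k:ℝ)*t), hfun x :=
      intervalIntegral.integral_add_adjacent_intervals (hfun_int _ _) (hfun_int _ _)
    have h1 : ((k:ℝ)*t - c) * hfun c ≤ ∫ x in c..((k:ℝ)*t), hfun x :=
      (step_bounds hc.le hcon.le).1
    have h2 : (1:ℝ) ≤ hfun c := hfun_one_le hc.le
    have h3 : (0:ℝ) < (k:ℝ)*t - c := by linarith
    have : (1:ℝ) < ∫ x in (0:ℝ)..((k:ℝ)*t), hfun x := by
      rw [← hsplit, hck]
      nlinarith
    linarith [hlow, hsum.le]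
  -- c ≤ (k+1)*t
  have hc2 : c ≤ ((k:ℝ)+1) * t := by
    by_contra hcon
    push_neg at hcon
    have hk1 : (0:ℝ) ≤ ((k:ℝ)+1)*t := by positivity
    have hsplit : (∫ x in (0:ℝ)..(((k:ℝ)+1)*t), hfun x) + (∫ x in (((k:ℝ)+1)*t)..c, hfun x)
        = ∫ x in (0:ℝ)..c, hfun x :=
      intervalIntegral.integral_add_adjacent_intervals (hfun_int _ _) (hfun_int _ _)
    -- sum ≤ ∫_t^{(k+1)t} ≤ ∫_0^{(k+1)t}
    have hsplit2 : (∫ x in (0:ℝ)..t, hfun x) + (∫ x in t..(((k:ℝ)+1)*t), hfun x)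
        = ∫ x in (0:ℝ)..(((k:ℝ)+1)*t), hfun x :=
      intervalIntegral.integral_add_adjacent_intervals (hfun_int _ _) (hfun_int _ _)
    have h0t : (t - 0) * hfun 0 ≤ ∫ x in (0:ℝ)..t, hfun x := (step_bounds le_rfl ht.le).1
    have h0t' : (0:ℝ) ≤ ∫ x in (0:ℝ)..t, hfun x := by
      have : hfun 0 = 1 := by simp [hfun]
      nlinarith
    have hSle : (1:ℝ) ≤ ∫ x in (0:ℝ)..(((k:ℝ)+1)*t), hfun x := by
      rw [← hsplit2]
      linarith [hsum.ge, hhigh]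
    have h1 : (c - ((k:ℝ)+1)*t) * hfun (((k:ℝ)+1)*t) ≤ ∫ x in (((k:ℝ)+1)*t)..c, hfun x :=
      (step_bounds hk1 hcon.le).1
    have h2 : (1:ℝ) ≤ hfun (((k:ℝ)+1)*t) := hfun_one_le hk1
    have h3 : (0:ℝ) < c - ((k:ℝ)+1)*t := by linarith
    have : (1:ℝ) < ∫ x in (0:ℝ)..c, hfun x := by
      rw [← hsplit]
      nlinarith
    linarith [hck.le]
  have hkpos : (0:ℝ) < (k:ℝ) := by exact_mod_cast hk
  constructor
  · -- 1 - exp(-c/(k+1)) ≤ 1 - d k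
    have h1 : c / ((k:ℝ)+1) ≤ t := by
      rw [div_le_iff₀ (by positivity)]
      linarith
    have : Real.exp (-t) ≤ Real.exp (-c/((k:ℝ)+1)) := by
      apply Real.exp_le_exp.mpr
      rw [neg_div]
      linarith
    rw [hdk]; linarith
  · -- 1 - d k < c / k
    have h1 : t ≤ c / (k:ℝ) := by
      rw [le_div_iff₀ hkpos]
      linarith
    have h2 : 1 - t < Real.exp (-t) := by
      have := Real.add_one_lt_exp (x := -t) (by linarith)
      linarith
    rw [hdk]; linarith
end

section
/- Let c be the unique positive real number with ∫₀^c (e^x − 1)/x dx = 1, and let w : (0,1) → ℝ be defined by w(t) = −e^{−c} + (e^{−ct} − e^{−ct/(1−t)})/t + (e^{−ct} − t·e^{−c})/(1−t) + (c/(1−t))·[I(c/(1−t), c) − I(ct/(1−t), ct)], where I(t,s) = ∫_s^t e^{−ξ}/ξ dξ. Then for every t ∈ (0,1), w(t) = ∫₀^{c/(1−t)} e^{−ℓ}·[1 − (t − max(0, 1 − c/ℓ))·(e^{ℓ(1−t)} − 1)/(1−t)] dℓ. -/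
/-- `I(t,s) = ∫_s^t e^{−ξ}/ξ dξ`. -/
noncomputable def Ifun (t s : ℝ) : ℝ := ∫ ξ in s..t, Real.exp (-ξ) / ξ

/-- The asymptotic winning rate `w` of the full-information best choice problem. -/
noncomputable def winRate (c t : ℝ) : ℝ :=
  -Real.exp (-c) + (Real.exp (-c * t) - Real.exp (-c * t / (1 - t))) / t
    + (Real.exp (-c * t) - t * Real.exp (-c)) / (1 - t)
    + (c / (1 - t)) * (Ifun (c / (1 - t)) c - Ifun (c * t / (1 - t)) (c * t))

lemma exp_int (k a b : ℝ) (hk : k ≠ 0) :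
    ∫ x in a..b, Real.exp (-(k * x)) = (Real.exp (-(k * a)) - Real.exp (-(k * b))) / k := by
  have h : ∀ x ∈ Set.uIcc a b,
      HasDerivAt (fun y => -Real.exp (-(k * y)) / k) (Real.exp (-(k * x))) x := by
    intro x _
    have h1 : HasDerivAt (fun y : ℝ => -(k * y)) (-k) x := by
      simpa [Pi.neg_def] using ((hasDerivAt_id x).const_mul k).neg
    have h2 := h1.exp.fun_neg.div_const k
    refine h2.congr_deriv ?_
    rw [mul_neg, neg_neg, mul_div_assoc, div_self hk, mul_one]
  rw [intervalIntegral.integral_eq_sub_of_hasDerivAt h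
    ((by fun_prop : Continuous fun x : ℝ => Real.exp (-(k * x))).intervalIntegrable a b)]
  ring

lemma exp_div_int (k a b : ℝ) (hk : k ≠ 0) :
    ∫ x in a..b, Real.exp (-(k * x)) / x = Ifun (k * b) (k * a) := by
  have h := intervalIntegral.smul_integral_comp_mul_left
    (f := fun ξ => Real.exp (-ξ) / ξ) (a := a) (b := b) k
  rw [Ifun, ← h, smul_eq_mul]
  rw [← intervalIntegral.integral_const_mul]
  apply intervalIntegral.integral_congr
  intro x _
  rcases eq_or_ne x 0 with rfl | hx
  · simp
  · field_simp

noncomputable def gOne (t ℓ : ℝ) : ℝ :=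
  Real.exp (-(1*ℓ)) - t/(1-t) * (Real.exp (-(t*ℓ)) - Real.exp (-(1*ℓ)))

noncomputable def gTwo (c t ℓ : ℝ) : ℝ :=
  Real.exp (-(1*ℓ)) + (Real.exp (-(t*ℓ)) - Real.exp (-(1*ℓ)))
    - c/(1-t) * (Real.exp (-(t*ℓ))/ℓ - Real.exp (-(1*ℓ))/ℓ)

lemma gOne_int (c t : ℝ) (ht : t ≠ 0) :
    ∫ ℓ in (0:ℝ)..c, gOne t ℓ
      = (1 - Real.exp (-c))
        - t/(1-t) * ((1 - Real.exp (-(t*c)))/t - (1 - Real.exp (-c))) := by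
  unfold gOne
  have hA : IntervalIntegrable (fun ℓ => Real.exp (-(1*ℓ))) MeasureTheory.volume 0 c :=
    (by fun_prop : Continuous fun ℓ : ℝ => Real.exp (-(1*ℓ))).intervalIntegrable _ _
  have hB : IntervalIntegrable (fun ℓ => Real.exp (-(t*ℓ))) MeasureTheory.volume 0 c :=
    (by fun_prop : Continuous fun ℓ : ℝ => Real.exp (-(t*ℓ))).intervalIntegrable _ _
  rw [intervalIntegral.integral_sub hA ((hB.sub hA).const_mul _),
    intervalIntegral.integral_const_mul, intervalIntegral.integral_sub hB hA,
    exp_int 1 _ _ one_ne_zero, exp_int t _ _ ht]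
  simp [Real.exp_zero]

lemma gTwo_int (c t a b : ℝ) (ht : t ≠ 0) (h0 : ∀ ℓ ∈ Set.uIcc a b, ℓ ≠ 0) :
    ∫ ℓ in a..b, gTwo c t ℓ
      = (Real.exp (-a) - Real.exp (-b))
        + ((Real.exp (-(t*a)) - Real.exp (-(t*b)))/t - (Real.exp (-a) - Real.exp (-b)))
        - c/(1-t) * (Ifun (t*b) (t*a) - Ifun b a) := by
  unfold gTwo
  have hc1 : Continuous fun ℓ : ℝ => Real.exp (-(1*ℓ)) := by fun_prop
  have hct : Continuous fun ℓ : ℝ => Real.exp (-(t*ℓ)) := by fun_prop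
  have hA : IntervalIntegrable (fun ℓ => Real.exp (-(1*ℓ))) MeasureTheory.volume a b :=
    hc1.intervalIntegrable _ _
  have hB : IntervalIntegrable (fun ℓ => Real.exp (-(t*ℓ))) MeasureTheory.volume a b :=
    hct.intervalIntegrable _ _
  have hC : IntervalIntegrable (fun ℓ => Real.exp (-(t*ℓ))/ℓ) MeasureTheory.volume a b :=
    (hct.continuousOn.div continuousOn_id h0).intervalIntegrable
  have hD : IntervalIntegrable (fun ℓ => Real.exp (-(1*ℓ))/ℓ) MeasureTheory.volume a b :=
    (hc1.continuousOn.div continuousOn_id h0).intervalIntegrable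
  rw [intervalIntegral.integral_sub (hA.add (hB.sub hA)) ((hC.sub hD).const_mul _),
    intervalIntegral.integral_add hA (hB.sub hA), intervalIntegral.integral_sub hB hA,
    intervalIntegral.integral_const_mul, intervalIntegral.integral_sub hC hD,
    exp_int 1 _ _ one_ne_zero, exp_int t _ _ ht, exp_div_int t _ _ ht,
    exp_div_int 1 _ _ one_ne_zero]
  simp only [one_mul]
  ring

set_option maxHeartbeats 1000000 in
/-- For `t ∈ (0,1)`,
`w(t) = ∫₀^{c/(1−t)} e^{−ℓ}·[1 − (t − max(0, 1 − c/ℓ))·(e^{ℓ(1−t)} − 1)/(1−t)] dℓ`. -/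
theorem stmt_8 (c : ℝ) (hc : 0 < c)
    (hceq : (∫ x in (0:ℝ)..c, (Real.exp x - 1) / x) = 1) :
    ∀ t ∈ Set.Ioo (0:ℝ) 1,
      winRate c t =
        ∫ ℓ in (0:ℝ)..(c / (1 - t)),
          Real.exp (-ℓ) *
            (1 - (t - max 0 (1 - c / ℓ)) * (Real.exp (ℓ * (1 - t)) - 1) / (1 - t)) := by
  intro t ht
  obtain ⟨ht0, ht1⟩ := ht
  have hs : (0:ℝ) < 1 - t := by linarith
  have hs' : (1:ℝ) - t ≠ 0 := ne_of_gt hs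
  have ht0' : t ≠ 0 := ne_of_gt ht0
  have hcT : c ≤ c / (1 - t) := by
    rw [le_div_iff₀ hs]; nlinarith
  have hX : ∀ ℓ : ℝ, Real.exp (-(t*ℓ)) = Real.exp (-ℓ) * Real.exp (ℓ*(1-t)) := by
    intro ℓ; rw [← Real.exp_add]; congr 1; ring
  have heq1 : Set.EqOn
      (fun ℓ => Real.exp (-ℓ) *
        (1 - (t - max 0 (1 - c / ℓ)) * (Real.exp (ℓ * (1 - t)) - 1) / (1 - t)))
      (gOne t) (Set.uIcc 0 c) := by
    intro ℓ hℓ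
    rw [Set.uIcc_of_le hc.le] at hℓ
    rcases eq_or_lt_of_le hℓ.1 with h | h
    · subst h
      simp [gOne]
    · have hmax : max 0 (1 - c/ℓ) = 0 := by
        apply max_eq_left
        rw [sub_nonpos, le_div_iff₀ h]
        nlinarith [hℓ.2]
      dsimp only
      rw [hmax]
      unfold gOne
      simp only [one_mul]
      rw [hX ℓ]
      field_simp
      ring
  have heq2 : Set.EqOn
      (fun ℓ => Real.exp (-ℓ) *
        (1 - (t - max 0 (1 - c / ℓ)) * (Real.exp (ℓ * (1 - t)) - 1) / (1 - t)))
      (gTwo c t) (Set.uIcc c (c / (1 - t))) := by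
    intro ℓ hℓ
    rw [Set.uIcc_of_le hcT] at hℓ
    have hl : 0 < ℓ := lt_of_lt_of_le hc hℓ.1
    have hmax : max 0 (1 - c/ℓ) = 1 - c/ℓ := by
      apply max_eq_right
      rw [sub_nonneg, div_le_one hl]
      exact hℓ.1
    dsimp only
    rw [hmax]
    unfold gTwo
    simp only [one_mul]
    rw [hX ℓ]
    field_simp
    ring
  have hct : Continuous fun ℓ : ℝ => Real.exp (-(t*ℓ)) := by fun_prop
  have hc1 : Continuous fun ℓ : ℝ => Real.exp (-(1*ℓ)) := by fun_prop
  have hi1 : IntervalIntegrable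
      (fun ℓ => Real.exp (-ℓ) *
        (1 - (t - max 0 (1 - c / ℓ)) * (Real.exp (ℓ * (1 - t)) - 1) / (1 - t)))
      MeasureTheory.volume 0 c := by
    apply ContinuousOn.intervalIntegrable
    apply ContinuousOn.congr _ heq1
    exact (by unfold gOne; fun_prop : Continuous (gOne t)).continuousOn
  have h0 : ∀ ℓ ∈ Set.uIcc c (c / (1 - t)), ℓ ≠ 0 := by
    intro ℓ hℓ
    rw [Set.uIcc_of_le hcT] at hℓ
    exact ne_of_gt (lt_of_lt_of_le hc hℓ.1)
  have hi2 : IntervalIntegrable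
      (fun ℓ => Real.exp (-ℓ) *
        (1 - (t - max 0 (1 - c / ℓ)) * (Real.exp (ℓ * (1 - t)) - 1) / (1 - t)))
      MeasureTheory.volume c (c / (1 - t)) := by
    apply ContinuousOn.intervalIntegrable
    apply ContinuousOn.congr _ heq2
    unfold gTwo
    exact ((hc1.continuousOn.add (hct.continuousOn.sub hc1.continuousOn)).sub
      (continuousOn_const.mul ((hct.continuousOn.div continuousOn_id h0).sub
        (hc1.continuousOn.div continuousOn_id h0))))
  rw [← intervalIntegral.integral_add_adjacent_intervals hi1 hi2,
    intervalIntegral.integral_congr heq1, intervalIntegral.integral_congr heq2,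
    gOne_int c t ht0', gTwo_int c t c (c/(1-t)) ht0' h0]
  rw [show t * (c / (1-t)) = c * t / (1-t) by ring, show t * c = c * t by ring]
  unfold winRate
  rw [show -c * t = -(c*t) by ring, show -(c*t)/(1-t) = -(c*t/(1-t)) by ring]
  field_simp
  ring
end

section
/- Let c be the unique positive real number with ∫₀^c (e^x − 1)/x dx = 1, and let w : (0,1) → ℝ be defined by w(t) = −e^{−c} + (e^{−ct} − e^{−ct/(1−t)})/t + (e^{−ct} − t·e^{−c})/(1−t) + (c/(1−t))·[I(c/(1−t), c) − I(ct/(1−t), ct)], where I(t,s) = ∫_s^t e^{−ξ}/ξ dξ. Then lim_{t → 0+} w(t) = 1 − e^{−c} and lim_{t → 1−} w(t) = e^{−c}. -/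
section Aux
open Real Filter Set intervalIntegral MeasureTheory

lemma f_int {a b : ℝ} (ha : 0 < a) (hb : 0 < b) :
    IntervalIntegrable (fun ξ => Real.exp (-ξ) / ξ) volume a b := by
  apply ContinuousOn.intervalIntegrable
  apply ContinuousOn.div ((Real.continuous_exp.comp continuous_neg).continuousOn) continuousOn_id
  intro x hx
  have : 0 < x := lt_of_lt_of_le (lt_min ha hb) hx.1
  exact this.ne'

lemma one_div_int {a b : ℝ} (ha : 0 < a) (hb : 0 < b) :
    IntervalIntegrable (fun ξ => 1 / ξ) volume a b := by
  apply ContinuousOn.intervalIntegrable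
  apply ContinuousOn.div continuousOn_const continuousOn_id
  intro x hx
  exact (lt_of_lt_of_le (lt_min ha hb) hx.1).ne'

lemma int_nonneg {a b : ℝ} (ha : 0 < a) (hab : a ≤ b) :
    0 ≤ ∫ ξ in a..b, Real.exp (-ξ) / ξ := by
  apply intervalIntegral.integral_nonneg hab
  intro x hx
  have : 0 < x := lt_of_lt_of_le ha hx.1
  positivity

lemma exp_le_one' {x : ℝ} (hx : x ≤ 0) : Real.exp x ≤ 1 := by
  rw [show (1:ℝ) = Real.exp 0 by simp]
  exact Real.exp_le_exp_of_le hx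

lemma int_le_log {a b : ℝ} (ha : 0 < a) (hab : a ≤ b) :
    (∫ ξ in a..b, Real.exp (-ξ) / ξ) ≤ Real.log (b / a) := by
  have hb : 0 < b := ha.trans_le hab
  have h1 : (∫ ξ in a..b, 1 / ξ) = Real.log (b / a) := by
    apply integral_one_div
    intro h
    rcases Set.mem_uIcc.mp h with ⟨h1, _⟩ | ⟨h1, _⟩ <;> linarith
  rw [← h1]
  apply intervalIntegral.integral_mono_on hab (f_int ha hb) (one_div_int ha hb)
  intro x hx
  have hx0 : 0 < x := lt_of_lt_of_le ha hx.1
  gcongr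
  exact exp_le_one' (by linarith)

lemma exp_sub_exp_le {a b : ℝ} (ha : 0 ≤ a) (hab : a ≤ b) :
    Real.exp (-a) - Real.exp (-b) ≤ b - a := by
  have h1 := Real.add_one_le_exp (a - b)
  have h2 : Real.exp (-a) ≤ 1 := exp_le_one' (by linarith)
  have h3 : Real.exp (-b) = Real.exp (-a) * Real.exp (a - b) := by
    rw [← Real.exp_add]; ring_nf
  nlinarith [Real.exp_pos (-a), Real.exp_pos (a - b)]

lemma part1 (c : ℝ) (hc : 0 < c) :
    Filter.Tendsto (winRate c) (nhdsWithin 0 (Set.Ioo 0 1)) (nhds (1 - Real.exp (-c))) := by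
  set l := nhdsWithin (0:ℝ) (Set.Ioo 0 1) with hl
  have hmem : ∀ᶠ t in l, t ∈ Set.Ioo (0:ℝ) 1 := self_mem_nhdsWithin
  -- term A
  have hA : Tendsto (fun t => (Real.exp (-c*t) - Real.exp (-c*t/(1-t)))/t) l (nhds 0) := by
    have hg : Tendsto (fun t : ℝ => c*t/(1-t)) l (nhds 0) := by
      have : ContinuousAt (fun t : ℝ => c*t/(1-t)) 0 :=
        ((continuousAt_const.mul continuousAt_id).div
          (continuousAt_const.sub continuousAt_id) (by norm_num))
      have h : Tendsto (fun t : ℝ => c*t/(1-t)) l (nhds (c*0/(1-0))) :=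
        this.tendsto.mono_left nhdsWithin_le_nhds
      simpa using h
    apply tendsto_of_tendsto_of_tendsto_of_le_of_le' (tendsto_const_nhds (x := (0:ℝ))) hg
    · filter_upwards [hmem] with t ht
      obtain ⟨ht0, ht1⟩ := ht
      apply div_nonneg _ ht0.le
      rw [sub_nonneg]
      apply Real.exp_le_exp_of_le
      rw [div_le_iff₀ (by linarith)]
      nlinarith [mul_pos (mul_pos hc ht0) ht0]
    · filter_upwards [hmem] with t ht
      obtain ⟨ht0, ht1⟩ := ht
      have hab : c*t ≤ c*t/(1-t) := by
        rw [le_div_iff₀ (by linarith)]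
        nlinarith [mul_pos (mul_pos hc ht0) ht0]
      have hkey := exp_sub_exp_le (by positivity) hab
      have h1t : (1:ℝ) - t ≠ 0 := by linarith
      have heq : c*t/(1-t) - c*t = c*t/(1-t) * t := by
        field_simp
        ring
      rw [neg_mul, neg_div, div_le_iff₀ ht0]
      linarith
  -- term B
  have hB : Tendsto (fun t => (Real.exp (-c*t) - t*Real.exp (-c))/(1-t)) l (nhds 1) := by
    have hcont : ContinuousAt (fun t : ℝ => (Real.exp (-c*t) - t*Real.exp (-c))/(1-t)) 0 := by
      apply ContinuousAt.div
      · exact ((Real.continuous_exp.comp (continuous_const.mul continuous_id)).continuousAt).sub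
          (continuousAt_id.mul continuousAt_const)
      · exact continuousAt_const.sub continuousAt_id
      · norm_num
    have h : Tendsto (fun t : ℝ => (Real.exp (-c*t) - t*Real.exp (-c))/(1-t)) l
        (nhds ((Real.exp (-c*0) - 0*Real.exp (-c))/(1-0))) :=
      hcont.tendsto.mono_left nhdsWithin_le_nhds
    simpa using h
  -- term C
  have hlog : Tendsto (fun t : ℝ => Real.log (1/(1-t))) l (nhds 0) := by
    have : ContinuousAt (fun t : ℝ => Real.log (1/(1-t))) 0 := by
      apply ContinuousAt.log
      · exact continuousAt_const.div (continuousAt_const.sub continuousAt_id) (by norm_num)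
      · norm_num
    have h : Tendsto (fun t : ℝ => Real.log (1/(1-t))) l (nhds (Real.log (1/(1-0)))) :=
      this.tendsto.mono_left nhdsWithin_le_nhds
    simpa using h
  have hI1 : Tendsto (fun t => Ifun (c/(1-t)) c) l (nhds 0) := by
    apply tendsto_of_tendsto_of_tendsto_of_le_of_le' (tendsto_const_nhds (x := (0:ℝ))) hlog
    · filter_upwards [hmem] with t ht
      obtain ⟨ht0, ht1⟩ := ht
      exact int_nonneg hc (by rw [le_div_iff₀ (by linarith)]; nlinarith)
    · filter_upwards [hmem] with t ht
      obtain ⟨ht0, ht1⟩ := ht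
      have h := int_le_log hc (b := c/(1-t)) (by rw [le_div_iff₀ (by linarith)]; nlinarith)
      have h1t : (1:ℝ) - t ≠ 0 := by linarith
      have : c/(1-t)/c = 1/(1-t) := by
        rw [div_div, mul_comm, ← div_div, div_self hc.ne']
      rw [this] at h
      exact h
  have hI2 : Tendsto (fun t => Ifun (c*t/(1-t)) (c*t)) l (nhds 0) := by
    apply tendsto_of_tendsto_of_tendsto_of_le_of_le' (tendsto_const_nhds (x := (0:ℝ))) hlog
    · filter_upwards [hmem] with t ht
      obtain ⟨ht0, ht1⟩ := ht
      have hct : 0 < c*t := by positivity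
      exact int_nonneg hct (by rw [le_div_iff₀ (by linarith)]; nlinarith [mul_pos (mul_pos hc ht0) ht0])
    · filter_upwards [hmem] with t ht
      obtain ⟨ht0, ht1⟩ := ht
      have hct : 0 < c*t := by positivity
      have h := int_le_log hct (b := c*t/(1-t)) (by rw [le_div_iff₀ (by linarith)]; nlinarith [mul_pos (mul_pos hc ht0) ht0])
      have h1t : (1:ℝ) - t ≠ 0 := by linarith
      have : c*t/(1-t)/(c*t) = 1/(1-t) := by
        rw [div_div, mul_comm (1-t) (c*t), ← div_div, div_self hct.ne']
      rw [this] at h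
      exact h
  have hq : Tendsto (fun t : ℝ => c/(1-t)) l (nhds c) := by
    have : ContinuousAt (fun t : ℝ => c/(1-t)) 0 :=
      continuousAt_const.div (continuousAt_const.sub continuousAt_id) (by norm_num)
    have h : Tendsto (fun t : ℝ => c/(1-t)) l (nhds (c/(1-0))) :=
      this.tendsto.mono_left nhdsWithin_le_nhds
    simpa using h
  have hC : Tendsto (fun t => (c/(1-t)) * (Ifun (c/(1-t)) c - Ifun (c*t/(1-t)) (c*t)))
      l (nhds 0) := by
    have h := hq.mul (hI1.sub hI2)
    simpa using h
  have htotal := ((tendsto_const_nhds (x := -Real.exp (-c)) (f := l)).add hA).add hB |>.add hC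
  have heq : -Real.exp (-c) + 0 + 1 + 0 = 1 - Real.exp (-c) := by ring
  rw [heq] at htotal
  exact htotal.congr (fun t => rfl)

lemma part2 (c : ℝ) (hc : 0 < c) :
    Filter.Tendsto (winRate c) (nhdsWithin 1 (Set.Ioo 0 1)) (nhds (Real.exp (-c))) := by
  set l := nhdsWithin (1:ℝ) (Set.Ioo 0 1) with hl
  have hmem : ∀ᶠ t in l, t ∈ Set.Ioo (0:ℝ) 1 := self_mem_nhdsWithin
  have hne : l ≤ nhdsWithin 1 {(1:ℝ)}ᶜ :=
    nhdsWithin_mono _ (fun x hx => Set.mem_compl_singleton_iff.mpr (ne_of_lt hx.2))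
  -- exp(-(c*t/(1-t))) → 0
  have h1mt : Tendsto (fun t : ℝ => 1 - t) l (nhdsWithin 0 (Set.Ioi 0)) := by
    apply tendsto_nhdsWithin_of_tendsto_nhds_of_eventually_within
    · have h : Tendsto (fun t : ℝ => 1 - t) (nhds (1:ℝ)) (nhds (1 - 1)) :=
        (continuous_const.sub continuous_id).tendsto 1
      have h2 := h.mono_left (nhdsWithin_le_nhds (s := Set.Ioo 0 1))
      rw [sub_self] at h2
      exact h2
    · filter_upwards [hmem] with t ht
      exact sub_pos.mpr ht.2
  have hinv : Tendsto (fun t : ℝ => (1 - t)⁻¹) l atTop := tendsto_inv_nhdsGT_zero.comp h1mt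
  have hct : Tendsto (fun t : ℝ => c * t) l (nhds c) := by
    have h : Tendsto (fun t : ℝ => c * t) (nhds (1:ℝ)) (nhds (c * 1)) :=
      (continuous_const.mul continuous_id).tendsto 1
    have h2 := h.mono_left (nhdsWithin_le_nhds (s := Set.Ioo 0 1))
    rw [mul_one] at h2
    exact h2
  have hatTop : Tendsto (fun t : ℝ => c * t / (1 - t)) l atTop := by
    have := Filter.Tendsto.pos_mul_atTop hc hct hinv
    simpa [div_eq_mul_inv] using this
  have hexp : Tendsto (fun t : ℝ => Real.exp (-(c * t / (1 - t)))) l (nhds 0) :=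
    Real.tendsto_exp_neg_atTop_nhds_zero.comp hatTop
  have ht1 : Tendsto (fun t : ℝ => t) l (nhds 1) :=
    tendsto_id.mono_left (nhdsWithin_le_nhds (s := Set.Ioo 0 1))
  -- term A
  have hA : Tendsto (fun t => (Real.exp (-c*t) - Real.exp (-c*t/(1-t)))/t) l
      (nhds (Real.exp (-c))) := by
    have hnum1 : Tendsto (fun t : ℝ => Real.exp (-c*t)) l (nhds (Real.exp (-c))) := by
      have h : Tendsto (fun t : ℝ => Real.exp (-c*t)) (nhds (1:ℝ)) (nhds (Real.exp (-c*1))) :=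
        (Real.continuous_exp.comp (continuous_const.mul continuous_id)).tendsto 1
      have h2 := h.mono_left (nhdsWithin_le_nhds (s := Set.Ioo 0 1))
      rw [mul_one] at h2
      exact h2
    have hnum2 : Tendsto (fun t : ℝ => Real.exp (-c*t/(1-t))) l (nhds 0) := by
      have heq2 : (fun t : ℝ => Real.exp (-c*t/(1-t))) = fun t => Real.exp (-(c*t/(1-t))) := by
        funext t; rw [neg_mul, neg_div]
      rw [heq2]; exact hexp
    have h := (hnum1.sub hnum2).div ht1 one_ne_zero
    simpa [Pi.div_def] using h
  -- term B
  have hB : Tendsto (fun t => (Real.exp (-c*t) - t*Real.exp (-c))/(1-t)) l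
      (nhds (c*Real.exp (-c) + Real.exp (-c))) := by
    have hi : HasDerivAt (fun t : ℝ => -(c*t)) (-c) 1 := by
      simpa [Pi.neg_def] using ((hasDerivAt_id (1:ℝ)).const_mul c).neg
    have hg : HasDerivAt (fun t : ℝ => Real.exp (-(c*t))) (Real.exp (-(c*1)) * (-c)) 1 := hi.exp
    have hslope := hasDerivAt_iff_tendsto_slope.mp hg
    have hs2 : Tendsto (fun t : ℝ => (Real.exp (-(c*t)) - Real.exp (-(c*1)))/(t-1)) l
        (nhds (Real.exp (-(c*1)) * (-c))) := by
      apply (hslope.mono_left hne).congr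
      intro t
      rw [slope_def_field]
    have h := hs2.neg.add (tendsto_const_nhds (x := Real.exp (-c)) (f := l))
    have hval : -(Real.exp (-(c*1)) * (-c)) + Real.exp (-c)
        = c*Real.exp (-c) + Real.exp (-c) := by rw [mul_one]; ring
    rw [hval] at h
    apply h.congr'
    filter_upwards [hmem] with t ht
    have h1t : (1:ℝ) - t ≠ 0 := by
      intro h0; linarith [ht.2]
    have h1t' : t - 1 ≠ 0 := by
      intro h0; linarith [ht.2]
    rw [mul_one, neg_mul]
    field_simp
    ring
  -- FTC and term C2
  have hmeas : StronglyMeasurableAtFilter (fun ξ : ℝ => Real.exp (-ξ)/ξ) (nhds c) volume := by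
    apply MeasureTheory.StronglyMeasurable.stronglyMeasurableAtFilter
    exact ((Real.measurable_exp.comp measurable_neg).div measurable_id).stronglyMeasurable
  have hcontc : ContinuousAt (fun ξ : ℝ => Real.exp (-ξ)/ξ) c :=
    ((Real.continuous_exp.comp continuous_neg).continuousAt).div continuousAt_id hc.ne'
  have hF : HasDerivAt (fun u : ℝ => ∫ ξ in c..u, Real.exp (-ξ)/ξ) (Real.exp (-c)/c) c :=
    intervalIntegral.integral_hasDerivAt_right (f_int hc hc) hmeas hcontc
  have hG0 : HasDerivAt (fun t : ℝ => ∫ ξ in c..(c*t), Real.exp (-ξ)/ξ) (Real.exp (-c)/c * c)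
      1 := by
    have hlin : HasDerivAt (fun t : ℝ => c*t) c 1 := by
      simpa using (hasDerivAt_id (1:ℝ)).const_mul c
    have hF' : HasDerivAt (fun u : ℝ => ∫ ξ in c..u, Real.exp (-ξ)/ξ) (Real.exp (-c)/c)
        (c*1) := by rwa [mul_one]
    have := HasDerivAt.comp 1 hF' hlin
    simpa [Function.comp_def] using this
  have hG : HasDerivAt (fun t : ℝ => ∫ ξ in c*t..c, Real.exp (-ξ)/ξ) (-Real.exp (-c)) 1 := by
    have h2 : (fun t : ℝ => ∫ ξ in c*t..c, Real.exp (-ξ)/ξ)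
        = fun t : ℝ => -∫ ξ in c..(c*t), Real.exp (-ξ)/ξ := by
      funext t; rw [intervalIntegral.integral_symm]
    rw [h2]
    rw [div_mul_cancel₀ _ hc.ne'] at hG0
    exact hG0.neg
  have hC2 : Tendsto (fun t : ℝ => (∫ ξ in c*t..c, Real.exp (-ξ)/ξ)/(1-t)) l
      (nhds (Real.exp (-c))) := by
    have hs := (hasDerivAt_iff_tendsto_slope.mp hG).mono_left hne
    have h := hs.neg
    rw [neg_neg] at h
    apply h.congr'
    filter_upwards [hmem] with t ht
    rw [slope_def_field]
    have h1t : t - 1 ≠ 0 := by intro h0; linarith [ht.2]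
    have h1t' : (1:ℝ) - t ≠ 0 := by intro h0; linarith [ht.2]
    have hG1 : (∫ ξ in (c*1)..c, Real.exp (-ξ)/ξ) = 0 := by
      rw [mul_one, intervalIntegral.integral_same]
    rw [hG1]
    field_simp
    ring
  -- term C1
  have hC1 : Tendsto (fun t : ℝ => (c/(1-t)) * ∫ ξ in c*t/(1-t)..c/(1-t), Real.exp (-ξ)/ξ) l
      (nhds 0) := by
    have hgbound : Tendsto (fun t : ℝ => c * Real.exp (-(c*t/(1-t))) / t) l (nhds 0) := by
      have := ((tendsto_const_nhds (x := c) (f := l)).mul hexp).div ht1 one_ne_zero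
      simpa [Pi.div_def] using this
    apply tendsto_of_tendsto_of_tendsto_of_le_of_le' (tendsto_const_nhds (x := (0:ℝ))) hgbound
    · filter_upwards [hmem] with t ht
      obtain ⟨ht0, ht1'⟩ := ht
      have h1t : (0:ℝ) < 1 - t := by linarith
      have ha : 0 < c*t/(1-t) := by positivity
      have hab : c*t/(1-t) ≤ c/(1-t) := by gcongr; nlinarith
      exact mul_nonneg (by positivity) (int_nonneg ha hab)
    · filter_upwards [hmem] with t ht
      obtain ⟨ht0, ht1'⟩ := ht
      have h1t : (0:ℝ) < 1 - t := by linarith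
      have ha : 0 < c*t/(1-t) := by positivity
      have hb : 0 < c/(1-t) := by positivity
      have hab : c*t/(1-t) ≤ c/(1-t) := by gcongr; nlinarith
      set a := c*t/(1-t) with hadef
      have hint : (∫ ξ in a..(c/(1-t)), Real.exp (-ξ)/ξ)
          ≤ (c/(1-t) - a) * Real.exp (-a)/a := by
        have h := intervalIntegral.integral_mono_on (μ := volume) hab (f_int ha hb)
          (_root_.intervalIntegrable_const (c := Real.exp (-a)/a))
          (fun x hx => by
            have hx0 : 0 < x := lt_of_lt_of_le ha hx.1
            exact div_le_div₀ (Real.exp_pos _).le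
              (Real.exp_le_exp_of_le (by linarith [hx.1])) ha hx.1)
        rw [intervalIntegral.integral_const, smul_eq_mul] at h
        calc (∫ ξ in a..(c/(1-t)), Real.exp (-ξ)/ξ) ≤ (c/(1-t) - a) * (Real.exp (-a)/a) := h
          _ = (c/(1-t) - a) * Real.exp (-a)/a := by ring
      have hdiff : c/(1-t) - a = c := by
        rw [hadef]; field_simp
      rw [hdiff] at hint
      calc (c/(1-t)) * ∫ ξ in a..(c/(1-t)), Real.exp (-ξ)/ξ
          ≤ (c/(1-t)) * (c * Real.exp (-a)/a) := by
            exact mul_le_mul_of_nonneg_left hint (by positivity)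
        _ = c * Real.exp (-(c*t/(1-t))) / t := by
            rw [hadef]; field_simp
  -- assemble C
  have hC : Tendsto (fun t => (c/(1-t)) * (Ifun (c/(1-t)) c - Ifun (c*t/(1-t)) (c*t))) l
      (nhds (0 - c * Real.exp (-c))) := by
    have h := hC1.sub (hC2.const_mul c)
    apply h.congr'
    filter_upwards [hmem] with t ht
    obtain ⟨ht0, ht1'⟩ := ht
    have h1t : (0:ℝ) < 1 - t := by linarith
    have hct0 : 0 < c*t := by positivity
    have ha : 0 < c*t/(1-t) := by positivity
    have hb : 0 < c/(1-t) := by positivity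
    have h1 := intervalIntegral.integral_add_adjacent_intervals (μ := volume)
      (f_int hct0 hc) (f_int hc hb)
    have h2 := intervalIntegral.integral_add_adjacent_intervals (μ := volume)
      (f_int hct0 ha) (f_int ha hb)
    have hIf : Ifun (c/(1-t)) c - Ifun (c*t/(1-t)) (c*t)
        = (∫ ξ in c*t/(1-t)..c/(1-t), Real.exp (-ξ)/ξ)
          - (∫ ξ in c*t..c, Real.exp (-ξ)/ξ) := by
      simp only [Ifun]
      linarith
    rw [hIf, mul_sub]
    ring
  -- total
  have htotal := (((tendsto_const_nhds (x := -Real.exp (-c)) (f := l)).add hA).add hB).add hC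
  have heq : -Real.exp (-c) + Real.exp (-c) + (c*Real.exp (-c) + Real.exp (-c))
      + (0 - c * Real.exp (-c)) = Real.exp (-c) := by ring
  rw [heq] at htotal
  exact htotal.congr (fun t => rfl)

end Aux

/-- `lim_{t → 0+} w(t) = 1 − e^{−c}` and `lim_{t → 1−} w(t) = e^{−c}`,
where the limits are taken within `(0,1)`. -/
theorem stmt_9 (c : ℝ) (hc : 0 < c)
    (hceq : (∫ x in (0:ℝ)..c, (Real.exp x - 1) / x) = 1) :
    Filter.Tendsto (winRate c) (nhdsWithin 0 (Set.Ioo 0 1))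
      (nhds (1 - Real.exp (-c))) ∧
    Filter.Tendsto (winRate c) (nhdsWithin 1 (Set.Ioo 0 1))
      (nhds (Real.exp (-c))) := by
  exact ⟨part1 c hc, part2 c hc⟩
end

section
/- Let c be the unique positive real number with ∫₀^c (e^x − 1)/x dx = 1. Then 0.552 < 1 − e^{−c} < 0.553 and 0.447 < e^{−c} < 0.448. -/
open MeasureTheory intervalIntegral Real

private lemma f_intg {t : ℝ} (ht : 0 ≤ t) :
    IntervalIntegrable (fun x => (Real.exp x - 1) / x) volume 0 t := by
  rw [intervalIntegrable_iff, Set.uIoc_of_le ht]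
  apply Measure.integrableOn_of_bounded (M := Real.exp t) measure_Ioc_lt_top.ne
  · exact ((Real.measurable_exp.sub measurable_const).div measurable_id).aestronglyMeasurable
  · filter_upwards [ae_restrict_mem measurableSet_Ioc] with x hx
    have hx0 : 0 < x := hx.1
    have h1 : (1 - x) * Real.exp x ≤ 1 := by
      have h := Real.add_one_le_exp (-x)
      rw [Real.exp_neg] at h
      have hpos := Real.exp_pos x
      have : (1 - x) * Real.exp x ≤ (Real.exp x)⁻¹ * Real.exp x := by nlinarith
      rwa [inv_mul_cancel₀ hpos.ne'] at this
    have h2 : Real.exp x ≤ Real.exp t := Real.exp_le_exp.2 hx.2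
    have h3 : (1:ℝ) ≤ Real.exp x := Real.one_le_exp hx0.le
    rw [Real.norm_eq_abs, abs_of_nonneg (div_nonneg (by linarith) hx0.le)]
    rw [div_le_iff₀ hx0]
    nlinarith

private lemma poly_int (c3 t : ℝ) :
    (∫ x in (0:ℝ)..t, (1 + x/2 + x^2/6 + c3 * x^3)) =
      t + t^2/4 + t^3/18 + c3/4 * t^4 := by
  have h : ∀ x : ℝ, HasDerivAt (fun y => y + y^2/4 + y^3/18 + c3/4 * y^4)
      (1 + x/2 + x^2/6 + c3 * x^3) x := by
    intro x
    have := (((hasDerivAt_id x).add ((hasDerivAt_pow 2 x).div_const 4)).add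
      ((hasDerivAt_pow 3 x).div_const 18)).add ((hasDerivAt_pow 4 x).const_mul (c3/4))
    refine this.congr_deriv ?_
    push_cast
    ring
  have hcont : Continuous fun x : ℝ => 1 + x/2 + x^2/6 + c3 * x^3 := by continuity
  rw [intervalIntegral.integral_eq_sub_of_hasDerivAt (fun x _ => h x)
    (hcont.intervalIntegrable 0 t)]
  ring

/-- With `c` the unique positive root of `∫₀^c (e^x − 1)/x dx = 1`,
`0.552 < 1 − e^{−c} < 0.553` and `0.447 < e^{−c} < 0.448`. -/
theorem stmt_10 (c : ℝ) (hc : 0 < c)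
    (hceq : (∫ x in (0:ℝ)..c, (Real.exp x - 1) / x) = 1) :
    (0.552 < 1 - Real.exp (-c) ∧ 1 - Real.exp (-c) < 0.553) ∧
    (0.447 < Real.exp (-c) ∧ Real.exp (-c) < 0.448) := by
  set f : ℝ → ℝ := fun x => (Real.exp x - 1) / x with hf
  -- Lower bound on c : 0.804 < c
  have hlow : (0.804 : ℝ) < c := by
    by_contra h
    push_neg at h
    have hint1 : IntervalIntegrable f volume 0 c := f_intg hc.le
    have hint2 : IntervalIntegrable f volume c 0.804 :=
      hint1.symm.trans (f_intg (by norm_num))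
    have hsplit : (∫ x in (0:ℝ)..0.804, f x) = (∫ x in (0:ℝ)..c, f x) + ∫ x in c..(0.804:ℝ), f x :=
      (intervalIntegral.integral_add_adjacent_intervals hint1 hint2).symm
    have hnn : (0:ℝ) ≤ ∫ x in c..(0.804:ℝ), f x := by
      apply intervalIntegral.integral_nonneg h
      intro x hx
      have hx0 : 0 < x := lt_of_lt_of_le hc hx.1
      exact div_nonneg (by linarith [Real.one_le_exp hx0.le]) hx0.le
    have hge : (1:ℝ) ≤ ∫ x in (0:ℝ)..0.804, f x := by
      rw [hsplit, hceq]; linarith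
    have hmono : (∫ x in (0:ℝ)..0.804, f x) ≤
        ∫ x in (0:ℝ)..0.804, (1 + x/2 + x^2/6 + (5/96) * x^3) := by
      apply intervalIntegral.integral_mono_on (by norm_num) (f_intg (by norm_num))
        (by apply Continuous.intervalIntegrable; continuity)
      intro x hx
      rcases eq_or_lt_of_le hx.1 with heq | hx0
      · simp [hf, ← heq]
      · have hxle : x ≤ 1 := le_trans hx.2 (by norm_num)
        have hb := Real.exp_bound' hx0.le hxle (n := 4) (by norm_num)
        simp only [Finset.sum_range_succ, Finset.sum_range_zero, Nat.factorial] at hb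
        push_cast at hb
        rw [div_le_iff₀ hx0]
        nlinarith
    rw [poly_int] at hmono
    norm_num at hmono
    linarith
  -- Upper bound on c : c < 0.8048
  have hhigh : c < 0.8048 := by
    by_contra h
    push_neg at h
    have hint1 : IntervalIntegrable f volume 0 0.8048 := f_intg (by norm_num)
    have hint2 : IntervalIntegrable f volume 0.8048 c :=
      hint1.symm.trans (f_intg hc.le)
    have hsplit : (∫ x in (0:ℝ)..c, f x) =
        (∫ x in (0:ℝ)..0.8048, f x) + ∫ x in (0.8048:ℝ)..c, f x :=
      (intervalIntegral.integral_add_adjacent_intervals hint1 hint2).symm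
    have hnn : (0:ℝ) ≤ ∫ x in (0.8048:ℝ)..c, f x := by
      apply intervalIntegral.integral_nonneg h
      intro x hx
      have hx0 : (0:ℝ) < x := lt_of_lt_of_le (by norm_num) hx.1
      exact div_nonneg (by linarith [Real.one_le_exp hx0.le]) hx0.le
    have hle : (∫ x in (0:ℝ)..0.8048, f x) ≤ 1 := by
      rw [hsplit] at hceq; linarith
    have h0ae : ∀ᵐ x : ℝ, x ≠ 0 := by
      rw [ae_iff]
      have : {x : ℝ | ¬ x ≠ 0} = {0} := by ext x; simp
      rw [this]
      exact Real.volume_singleton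
    have hmono : (∫ x in (0:ℝ)..0.8048, (1 + x/2 + x^2/6 + (1/24) * x^3)) ≤
        ∫ x in (0:ℝ)..0.8048, f x := by
      apply intervalIntegral.integral_mono_ae_restrict (by norm_num)
        (by apply Continuous.intervalIntegrable; fun_prop) (f_intg (by norm_num))
      rw [Filter.EventuallyLE, ae_restrict_iff' measurableSet_Icc]
      filter_upwards [h0ae] with x hx0 hxmem
      have hxpos : 0 < x := lt_of_le_of_ne hxmem.1 (Ne.symm hx0)
      have hb := Real.sum_le_exp_of_nonneg hxpos.le 5
      simp only [Finset.sum_range_succ, Finset.sum_range_zero, Nat.factorial] at hb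
      push_cast at hb
      rw [le_div_iff₀ hxpos]
      nlinarith
    rw [poly_int] at hmono
    norm_num at hmono
    linarith
  -- numeric bounds on exp
  have hA : (1:ℝ)/0.448 < Real.exp 0.804 := by
    have h := Real.sum_le_exp_of_nonneg (by norm_num : (0:ℝ) ≤ 0.804) 6
    simp only [Finset.sum_range_succ, Finset.sum_range_zero, Nat.factorial] at h
    push_cast at h
    norm_num at h ⊢
    linarith
  have hB : Real.exp 0.8048 < 1/0.447 := by
    have h := Real.exp_bound' (by norm_num : (0:ℝ) ≤ 0.8048) (by norm_num) (n := 6) (by norm_num)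
    simp only [Finset.sum_range_succ, Finset.sum_range_zero, Nat.factorial] at h
    push_cast at h
    norm_num at h ⊢
    linarith
  have hub : Real.exp (-c) < 0.448 := by
    have h1 : Real.exp (-c) < Real.exp (-0.804) := Real.exp_lt_exp.2 (by linarith)
    have h2 : Real.exp (-0.804) * Real.exp (0.804) = 1 := by
      rw [← Real.exp_add]; norm_num
    nlinarith [Real.exp_pos (-0.804), Real.exp_pos (0.804:ℝ)]
  have hlb : 0.447 < Real.exp (-c) := by
    have h1 : Real.exp (-0.8048) < Real.exp (-c) := Real.exp_lt_exp.2 (by linarith)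
    have h2 : Real.exp (-0.8048) * Real.exp (0.8048) = 1 := by
      rw [← Real.exp_add]; norm_num
    nlinarith [Real.exp_pos (-0.8048), Real.exp_pos (0.8048:ℝ)]
  exact ⟨⟨by linarith, by linarith⟩, ⟨hlb, hub⟩⟩
end
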